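/- Fix n ≥ 1 and a measurable estimator θ̂ : ℝⁿ → ℝ. For each Δ > 0, let P₊^Δ be the n-fold product of N(Δ,1) and P₋^Δ the n-fold product of N(−Δ,1), and define L₊^Δ(y) = min(|θ̂(y) − Δ|, 2Δ) and L₋^Δ(y) = min(|θ̂(y) + Δ|, 2Δ). Then for every α ∈ [0,1): sup_{Δ > 0} inf_{t ∈ ℝ} { t + (1/(1−α))·(½∫(L₊^Δ−t)₊ dP₊^Δ + ½∫(L₋^Δ−t)₊ dP₋^Δ) } ≥ c_α/√n, where c_α = 2/(27(1−α)) for 0 ≤ α ≤ 1/3 and c_α = √α/(3√3) for 1/3 ≤ α < 1. -/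

import Mathlib

/-!
Le Cam's two-point method at separation `Δ = 1 / (2 √n)`. The sign test `S = {θ̂ ≥ 0}` forces
`L₊ ≥ Δ` off `S` and `L₋ ≥ Δ` on `S`, so the prior-predictive loss dominates a loss equal to `Δ`
with probability `w = (P₊(Sᶜ) + P₋(S)) / 2` and `0` otherwise, whose CVaR is
`Δ · min(1, w / (1 - α))`. The testing error `2w` is bounded below pointwise by
`min(f, g) ≥ (f + g) / 2 - ((f - g)² / h + h) / 4`, with `f, g, h` the densities of `N(±Δ, 1)ⁿ` and
`N(0, 1)ⁿ`; the right-hand side integrates in closed form, giving `2w ≥ 11/24` when `n Δ² = 1/4`.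
Finally `c_α (1 - α) ≤ 2/27` and `c_α ≤ 1/2`, so `2 c_α ≤ min(1, w / (1 - α))`.
-/

open MeasureTheory ProbabilityTheory Real

open scoped ENNReal

/-- The optimized constant `c_α`. -/
noncomputable def cAlpha (α : ℝ) : ℝ :=
  if α ≤ 1 / 3 then 2 / (27 * (1 - α)) else Real.sqrt α / (3 * Real.sqrt 3)

namespace MeasureTheory

theorem lintegral_fin_pi_prod {α : Type*} [MeasurableSpace α] {n : ℕ} (μ : Fin n → Measure α)
    [∀ i, SigmaFinite (μ i)] {f : Fin n → α → ℝ≥0∞} (hf : ∀ i, Measurable (f i)) :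
    ∫⁻ y, ∏ i, f i (y i) ∂Measure.pi μ = ∏ i, ∫⁻ x, f i x ∂μ i := by
  induction n with
  | zero => simp
  | succ n ih =>
    have hg : Measurable fun z : Fin n → α => ∏ i, f i.succ (z i) :=
      Finset.measurable_prod _ fun i _ => (hf i.succ).comp (measurable_pi_apply i)
    rw [← (measurePreserving_piFinSuccAbove μ 0).symm.lintegral_comp_emb
      (MeasurableEquiv.measurableEmbedding _)]
    simp only [MeasurableEquiv.piFinSuccAbove_symm_apply, Fin.insertNthEquiv_apply,
      Fin.insertNth_zero', Fin.prod_univ_succ, Fin.cons_zero, Fin.cons_succ]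
    rw [lintegral_prod_mul (hf 0).aemeasurable hg.aemeasurable, ih _ fun i => hf i.succ]
    rfl

theorem Measure.pi_withDensity {α : Type*} [MeasurableSpace α] {n : ℕ} (μ : Fin n → Measure α)
    [∀ i, SigmaFinite (μ i)] {f : Fin n → α → ℝ≥0∞} (hf : ∀ i, Measurable (f i))
    [∀ i, SigmaFinite ((μ i).withDensity (f i))] :
    Measure.pi (fun i => (μ i).withDensity (f i))
      = (Measure.pi μ).withDensity fun y => ∏ i, f i (y i) := by
  refine Measure.pi_eq fun s hs => ?_
  rw [withDensity_apply _ (MeasurableSet.univ_pi hs), Measure.restrict_pi_pi,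
    lintegral_fin_pi_prod _ hf]
  exact Finset.prod_congr rfl fun i _ => (withDensity_apply _ (hs i)).symm

end MeasureTheory

lemma add_div_two_sub_le_min {a b h : ℝ} (hh : 0 < h) :
    (a + b) / 2 - ((a - b) ^ 2 / h + h) / 4 ≤ min a b := by
  have hamgm : 2 * |a - b| ≤ (a - b) ^ 2 / h + h := by
    rw [div_add' _ _ _ hh.ne', le_div_iff₀ hh, ← sq_abs (a - b)]
    nlinarith [sq_nonneg (|a - b| - h)]
  rcases le_total a b with hab | hab
  · rw [min_eq_left hab, abs_of_nonpos (by linarith)] at *; linarith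
  · rw [min_eq_right hab, abs_of_nonneg (by linarith)] at *; linarith

lemma le_setIntegral_compl_add_setIntegral {α : Type*} [MeasurableSpace α] {ν : Measure α}
    {f g h : α → ℝ} {S : Set α} (hS : MeasurableSet S) (hf : Integrable f ν)
    (hg : Integrable g ν) (hh : Integrable h ν)
    (hχ : Integrable (fun x => (f x - g x) ^ 2 / h x) ν) (hpos : ∀ x, 0 < h x) :
    (∫ x, f x ∂ν + ∫ x, g x ∂ν) / 2 - (∫ x, (f x - g x) ^ 2 / h x ∂ν + ∫ x, h x ∂ν) / 4
      ≤ ∫ x in Sᶜ, f x ∂ν + ∫ x in S, g x ∂ν := by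
  classical
  have hmean : Integrable (fun x => (f x + g x) / 2) ν := (hf.add hg).div_const 2
  have hspread : Integrable (fun x => ((f x - g x) ^ 2 / h x + h x) / 4) ν :=
    (hχ.add hh).div_const 4
  calc (∫ x, f x ∂ν + ∫ x, g x ∂ν) / 2 - (∫ x, (f x - g x) ^ 2 / h x ∂ν + ∫ x, h x ∂ν) / 4
      = ∫ x, ((f x + g x) / 2 - ((f x - g x) ^ 2 / h x + h x) / 4) ∂ν := by
        rw [integral_sub hmean hspread, integral_div, integral_div, integral_add hf hg,
          integral_add hχ hh]
    _ ≤ ∫ x, S.piecewise g f x ∂ν :=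
        integral_mono (hmean.sub hspread) (.piecewise hS hg.integrableOn hf.integrableOn) fun x =>
        (add_div_two_sub_le_min (hpos x)).trans (by by_cases hx : x ∈ S <;> simp [hx])
    _ = ∫ x in Sᶜ, f x ∂ν + ∫ x in S, g x ∂ν := by
        rw [integral_piecewise hS hg.integrableOn hf.integrableOn, add_comm]

noncomputable def gaussianPDFPi {n : ℕ} (m : ℝ) (y : Fin n → ℝ) : ℝ :=
  ∏ i, gaussianPDFReal m 1 (y i)

lemma gaussianPDFPi_pos {n : ℕ} (m : ℝ) (y : Fin n → ℝ) : 0 < gaussianPDFPi m y :=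
  Finset.prod_pos fun i _ => gaussianPDFReal_pos m 1 (y i) one_ne_zero

lemma integrable_gaussianPDFPi {n : ℕ} (m : ℝ) : Integrable (gaussianPDFPi (n := n) m) :=
  .fintype_prod (f := fun _ => gaussianPDFReal m 1) fun _ => integrable_gaussianPDFReal m 1

lemma integral_gaussianPDFPi {n : ℕ} (m : ℝ) : ∫ y, gaussianPDFPi (n := n) m y = 1 := by
  unfold gaussianPDFPi
  rw [integral_fintype_prod_volume_eq_pow (fun x => gaussianPDFReal m 1 x),
    integral_gaussianPDFReal_eq_one m one_ne_zero, one_pow]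

lemma gaussianPDFReal_mul_gaussianPDFReal (a b x : ℝ) :
    gaussianPDFReal a 1 x * gaussianPDFReal b 1 x
      = exp (a * b) * gaussianPDFReal (a + b) 1 x * gaussianPDFReal 0 1 x := by
  simp only [gaussianPDFReal, NNReal.coe_one, mul_one]
  have hexponent : -(x - a) ^ 2 / 2 + -(x - b) ^ 2 / 2
      = a * b + (-(x - (a + b)) ^ 2 / 2 + -(x - 0) ^ 2 / 2) := by
    ring
  rw [mul_mul_mul_comm, ← exp_add, hexponent, exp_add, exp_add]
  ring

lemma gaussianPDFPi_mul {n : ℕ} (a b : ℝ) (y : Fin n → ℝ) :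
    gaussianPDFPi a y * gaussianPDFPi b y
      = exp (n * (a * b)) * gaussianPDFPi (a + b) y * gaussianPDFPi 0 y := by
  simp only [gaussianPDFPi, ← Finset.prod_mul_distrib, gaussianPDFReal_mul_gaussianPDFReal]
  rw [Finset.prod_mul_distrib, Finset.prod_mul_distrib, Finset.prod_const, Finset.card_univ,
    Fintype.card_fin, ← exp_nat_mul]

lemma pi_gaussianReal_eq_withDensity (n : ℕ) (m : ℝ) :
    Measure.pi (fun _ : Fin n => gaussianReal m 1)
      = volume.withDensity fun y => ∏ i, gaussianPDF m 1 (y i) := by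
  have : SigmaFinite (volume.withDensity (gaussianPDF m 1)) := by
    rw [← gaussianReal_of_var_ne_zero m one_ne_zero]; infer_instance
  simp_rw [gaussianReal_of_var_ne_zero m one_ne_zero]
  rw [Measure.pi_withDensity _ fun _ => measurable_gaussianPDF m 1, volume_pi]

lemma integral_pi_gaussianReal {n : ℕ} (m : ℝ) (g : (Fin n → ℝ) → ℝ) :
    ∫ y, g y ∂Measure.pi (fun _ : Fin n => gaussianReal m 1) = ∫ y, gaussianPDFPi m y * g y := by
  have hmeas : Measurable fun y : Fin n → ℝ => ∏ i, gaussianPDF m 1 (y i) := by fun_prop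
  rw [pi_gaussianReal_eq_withDensity, integral_withDensity_eq_integral_toReal_smul hmeas
    (ae_of_all _ fun y => ENNReal.prod_lt_top fun i _ => ENNReal.ofReal_lt_top)]
  simp [gaussianPDFPi, gaussianPDF, ENNReal.toReal_prod, ENNReal.toReal_ofReal,
    gaussianPDFReal_nonneg]

lemma measureReal_pi_gaussianReal {n : ℕ} (m : ℝ) {S : Set (Fin n → ℝ)} (hS : MeasurableSet S) :
    (Measure.pi fun _ : Fin n => gaussianReal m 1).real S = ∫ y in S, gaussianPDFPi m y := by
  rw [← integral_indicator_one hS, integral_pi_gaussianReal, ← integral_indicator hS]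
  congr 1 with y
  by_cases hy : y ∈ S <;> simp [hy]

lemma pi_gaussianReal_measureReal_compl_add_measureReal_ge (n : ℕ) (Δ : ℝ)
    {S : Set (Fin n → ℝ)} (hS : MeasurableSet S) :
    1 - (2 * exp (n * Δ ^ 2) - 2 * exp (-(n * Δ ^ 2)) + 1) / 4
      ≤ (Measure.pi fun _ : Fin n => gaussianReal Δ 1).real Sᶜ
        + (Measure.pi fun _ : Fin n => gaussianReal (-Δ) 1).real S := by
  set F := gaussianPDFPi (n := n)
  have hχ : (fun y => (F Δ y - F (-Δ) y) ^ 2 / F 0 y) = fun y =>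
      exp (n * (Δ * Δ)) * F (Δ + Δ) y - 2 * (exp (n * (Δ * -Δ)) * F (Δ + -Δ) y)
        + exp (n * (-Δ * -Δ)) * F (-Δ + -Δ) y := by
    ext y
    rw [div_eq_iff (gaussianPDFPi_pos 0 y).ne']
    linear_combination gaussianPDFPi_mul Δ Δ y - 2 * gaussianPDFPi_mul Δ (-Δ) y
      + gaussianPDFPi_mul (-Δ) (-Δ) y
  have hint : ∀ m, Integrable (F m) := integrable_gaussianPDFPi
  have hmul : ∀ c m, Integrable (fun y => c * F m y) := fun c m => (hint m).const_mul c
  have hχint : Integrable (fun y => (F Δ y - F (-Δ) y) ^ 2 / F 0 y) := by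
    rw [hχ]
    exact ((hmul _ _).sub ((hmul _ _).const_mul 2)).add (hmul _ _)
  have hχval : ∫ y, (F Δ y - F (-Δ) y) ^ 2 / F 0 y
      = 2 * exp (n * Δ ^ 2) - 2 * exp (-(n * Δ ^ 2)) := by
    rw [hχ, integral_add ?_ (hmul _ _), integral_sub (hmul _ _) ((hmul _ _).const_mul 2)]
    · simp only [integral_const_mul, F, integral_gaussianPDFPi]
      ring_nf
    · exact (hmul _ _).sub ((hmul _ _).const_mul 2)
  have h := le_setIntegral_compl_add_setIntegral hS (hint Δ) (hint (-Δ)) (hint 0) hχint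
    (gaussianPDFPi_pos 0)
  rw [hχval, integral_gaussianPDFPi, integral_gaussianPDFPi, integral_gaussianPDFPi] at h
  rw [measureReal_pi_gaussianReal _ hS.compl, measureReal_pi_gaussianReal _ hS]
  linarith

lemma exp_sub_exp_neg_le {x : ℝ} (h0 : 0 < x) (h1 : x < 1) :
    exp x - exp (-x) ≤ 1 / (1 - x) - (1 - x) := by
  have := exp_bound_div_one_sub_of_interval' h0 h1
  have := add_one_le_exp (-x)
  linarith

lemma le_two_point_cvar {α κ w Δ : ℝ} (hα0 : 0 ≤ α) (hα1 : α < 1) (hΔ : 0 ≤ Δ) (hκ : κ ≤ 1)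
    (hw : κ * (1 - α) ≤ w) (t : ℝ) :
    κ * Δ ≤ t + 1 / (1 - α) * (w * max (Δ - t) 0 + (1 - w) * max (-t) 0) := by
  set r := 1 / (1 - α)
  have hr : r * (1 - α) = 1 := one_div_mul_cancel (by linarith)
  have hr1 : 1 ≤ r := by rw [le_div_iff₀ (by linarith)]; linarith
  have hκw : κ ≤ r * w := by nlinarith
  rcases le_total t 0 with ht0 | ht0
  · rw [max_eq_left (by linarith), max_eq_left (by linarith)]
    nlinarith [mul_le_mul_of_nonneg_right hκw hΔ, mul_nonneg (neg_nonneg.2 ht0) (sub_nonneg.2 hr1)]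
  rcases le_total t Δ with htΔ | htΔ
  · rw [max_eq_left (by linarith), max_eq_right (by linarith)]
    rcases le_total (r * w) 1 with hrw | hrw
    · nlinarith [mul_le_mul_of_nonneg_right hκw hΔ, mul_nonneg ht0 (sub_nonneg.2 hrw)]
    · nlinarith [mul_le_mul_of_nonneg_right hκ hΔ, mul_nonneg (sub_nonneg.2 htΔ) (sub_nonneg.2 hrw)]
  · rw [max_eq_right (by linarith), max_eq_right (by linarith)]
    nlinarith [mul_le_mul_of_nonneg_right hκ hΔ]

lemma le_integral_max_sub_zero {Ω : Type*} [MeasurableSpace Ω] {μ : Measure Ω}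
    [IsProbabilityMeasure μ] {X : Ω → ℝ} {E : Set Ω} {Δ : ℝ} (hE : MeasurableSet E)
    (hX : Integrable X μ) (hX0 : ∀ ω, 0 ≤ X ω) (hXE : ∀ ω ∈ E, Δ ≤ X ω) (t : ℝ) :
    μ.real E * max (Δ - t) 0 + (1 - μ.real E) * max (-t) 0 ≤ ∫ ω, max (X ω - t) 0 ∂μ := by
  classical
  calc μ.real E * max (Δ - t) 0 + (1 - μ.real E) * max (-t) 0
      = ∫ ω, E.piecewise (fun _ => max (Δ - t) 0) (fun _ => max (-t) 0) ω ∂μ := by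
        rw [integral_piecewise hE (integrable_const _).integrableOn
          (integrable_const _).integrableOn, setIntegral_const, setIntegral_const,
          probReal_compl_eq_one_sub hE, smul_eq_mul, smul_eq_mul]
    _ ≤ ∫ ω, max (X ω - t) 0 ∂μ := by
        refine integral_mono (.piecewise hE (integrable_const _).integrableOn
          (integrable_const _).integrableOn) (hX.sub (integrable_const t)).pos_part fun ω => ?_
        by_cases hω : ω ∈ E
        · rw [Set.piecewise_eq_of_mem _ _ _ hω]
          exact max_le_max (by linarith [hXE ω hω]) le_rfl
        · rw [Set.piecewise_eq_of_notMem _ _ _ hω]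
          exact max_le_max (by linarith [hX0 ω]) le_rfl

lemma le_cvar_of_separating_set {Ω : Type*} [MeasurableSpace Ω] {P Q : Measure Ω}
    [IsProbabilityMeasure P] [IsProbabilityMeasure Q] {L₁ L₂ : Ω → ℝ} {S : Set Ω}
    {α κ Δ : ℝ} (hα0 : 0 ≤ α) (hα1 : α < 1) (hΔ : 0 ≤ Δ) (hκ : κ ≤ 1)
    (hS : MeasurableSet S) (hL₁ : Integrable L₁ P) (hL₂ : Integrable L₂ Q)
    (hL₁0 : ∀ ω, 0 ≤ L₁ ω) (hL₂0 : ∀ ω, 0 ≤ L₂ ω)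
    (hL₁S : ∀ ω ∈ Sᶜ, Δ ≤ L₁ ω) (hL₂S : ∀ ω ∈ S, Δ ≤ L₂ ω)
    (hsep : 2 * κ * (1 - α) ≤ P.real Sᶜ + Q.real S) (t : ℝ) :
    κ * Δ ≤ t + 1 / (1 - α) *
      (1 / 2 * ∫ ω, max (L₁ ω - t) 0 ∂P + 1 / 2 * ∫ ω, max (L₂ ω - t) 0 ∂Q) := by
  have h₁ := le_integral_max_sub_zero hS.compl hL₁ hL₁0 hL₁S t
  have h₂ := le_integral_max_sub_zero hS hL₂ hL₂0 hL₂S t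
  have hr : 0 ≤ 1 / (1 - α) := by rw [one_div_nonneg]; linarith
  have htwo := le_two_point_cvar (w := (P.real Sᶜ + Q.real S) / 2) hα0 hα1 hΔ hκ (by linarith) t
  refine htwo.trans ?_
  gcongr t + _ * ?_
  linarith

lemma integrable_min_abs {Ω : Type*} [MeasurableSpace Ω] {μ : Measure Ω} [IsFiniteMeasure μ]
    {f : Ω → ℝ} (hf : Measurable f) {b : ℝ} (hb : 0 ≤ b) :
    Integrable (fun ω => min |f ω| b) μ :=
  .of_bound (hf.abs.min measurable_const).aestronglyMeasurable b (ae_of_all _ fun ω => by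
    rw [norm_of_nonneg (le_min (abs_nonneg _) hb)]
    exact min_le_right _ _)

lemma cAlpha_le_half {α : ℝ} (hα1 : α < 1) : cAlpha α ≤ 1 / 2 := by
  unfold cAlpha
  split_ifs with h
  · rw [div_le_iff₀ (by linarith)]; linarith
  · have hs : √α ≤ 1 := sqrt_le_one.2 hα1.le
    have h3 : 1 ≤ √3 := one_le_sqrt.2 (by norm_num)
    rw [div_le_iff₀ (by positivity)]; linarith

lemma cAlpha_mul_one_sub_le {α : ℝ} (hα0 : 0 ≤ α) (hα1 : α < 1) :
    cAlpha α * (1 - α) ≤ 2 / 27 := by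
  unfold cAlpha
  split_ifs with h
  · rw [div_mul_eq_mul_div, div_le_iff₀ (by linarith)]; linarith
  · have hu2 : √3 ^ 2 = 3 := sq_sqrt (by norm_num)
    have hs2 : √α ^ 2 = α := sq_sqrt hα0
    -- `s (1 - s²)` is maximal at `s = 1 / √3`
    have hfactor : 2 / 3 - √3 * (√α * (1 - α)) = (√3 * √α - 1) ^ 2 * (√3 * √α + 2) / 3 := by
      linear_combination (-(1 / 3) * √3 * √α ^ 3) * hu2 + (-√3 * √α) * hs2
    have hsplit : √α / (3 * √3) * (1 - α) = √3 * (√α * (1 - α)) / 9 := by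
      field_simp
      rw [hu2]
      ring
    rw [hsplit]
    nlinarith [hfactor, mul_nonneg (sq_nonneg (√3 * √α - 1)) (by positivity : (0:ℝ) ≤ √3 * √α + 2)]

theorem gaussian_mean_estimation_worst_case_cvar
    (n : ℕ) (hn : 1 ≤ n)
    (θ : (Fin n → ℝ) → ℝ) (hθ : Measurable θ)
    (α : ℝ) (hα : α ∈ Set.Ico (0 : ℝ) 1) :
    ((cAlpha α / Real.sqrt n : ℝ) : EReal) ≤
      ⨆ Δ : {Δ : ℝ // 0 < Δ},
        ((⨅ t : ℝ, t + (1 / (1 - α)) *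
            ((1 / 2) * (∫ y, max (min |θ y - Δ.1| (2 * Δ.1) - t) 0
                ∂(Measure.pi fun _ : Fin n => gaussianReal Δ.1 1))
              + (1 / 2) * (∫ y, max (min |θ y + Δ.1| (2 * Δ.1) - t) 0
                ∂(Measure.pi fun _ : Fin n => gaussianReal (-Δ.1) 1))) : ℝ) : EReal) := by
  obtain ⟨hα0, hα1⟩ := hα
  have hn' : (0 : ℝ) < n := by exact_mod_cast hn
  set Δ : ℝ := 1 / (2 * √n) with hΔ_def
  have hΔ : 0 < Δ := by positivity
  have hnΔ : (n : ℝ) * Δ ^ 2 = 1 / 4 := by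
    rw [hΔ_def, div_pow, mul_pow, sq_sqrt hn'.le]
    field_simp
    ring
  set S : Set (Fin n → ℝ) := {y | 0 ≤ θ y}
  have hS : MeasurableSet S := measurableSet_le measurable_const hθ
  have hsep := pi_gaussianReal_measureReal_compl_add_measureReal_ge n Δ hS
  have hexp := exp_sub_exp_neg_le (x := 1 / 4) (by norm_num) (by norm_num)
  rw [hnΔ] at hsep
  refine le_iSup_of_le ⟨Δ, hΔ⟩ (EReal.coe_le_coe_iff.mpr (le_ciInf fun t => ?_))
  have hcΔ : cAlpha α / √n = 2 * cAlpha α * Δ := by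
    rw [hΔ_def]
    field_simp
  rw [hcΔ]
  have hlow₁ (y) (hy : y ∈ Sᶜ) : Δ ≤ min |θ y - Δ| (2 * Δ) :=
    le_min (le_abs.2 (Or.inr (by linarith [not_le.1 (show ¬0 ≤ θ y from hy)]))) (by linarith)
  have hlow₂ (y) (hy : y ∈ S) : Δ ≤ min |θ y + Δ| (2 * Δ) :=
    le_min (le_abs.2 (Or.inl (by linarith [show 0 ≤ θ y from hy]))) (by linarith)
  exact le_cvar_of_separating_set hα0 hα1 hΔ.le (by linarith [cAlpha_le_half hα1]) hS
    (integrable_min_abs (hθ.sub_const Δ) (by positivity))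
    (integrable_min_abs (hθ.add_const Δ) (by positivity))
    (fun _ => le_min (abs_nonneg _) (by positivity))
    (fun _ => le_min (abs_nonneg _) (by positivity)) hlow₁ hlow₂
    (by linarith [cAlpha_mul_one_sub_le hα0 hα1]) t
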